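/- arXiv:2210.03831 — 3 statements merged into one kernel-verified Lean document; each statement's English description precedes it below -/
import Mathlib

section
/- Let f : D → ℝ⁺ have global sensitivity Δ_f, let 0 < ρ < 1/2 and τ ≥ 0, and let g : D → ℝ⁺ satisfy (1-ρ)f(x) - τ ≤ g(x) ≤ (1+ρ)f(x) + τ for all x. Define S(x) = 4ρ·g(x) + 4τ + Δ_f. Then for any neighboring inputs D ∼ D', we have S(D) ≤ e^{6ρ}·S(D'). -/
/-- If `g` is a `(ρ,τ)`-approximation of `f` (pointwise), `f` has global sensitivity `Δ`,
`0 < ρ < 1/2` and `τ ≥ 0`, then `S x = 4ρ·g x + 4τ + Δ` satisfies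
`S d ≤ e^{6ρ}·S d'` for neighboring inputs `d ∼ d'`. -/
theorem approx_smoothness_bound {D : Type*} (Neighbor : D → D → Prop)
    (hsymm : ∀ a b, Neighbor a b → Neighbor b a)
    (f g : D → ℝ) (Δ ρ τ : ℝ)
    (hf : ∀ x, 0 ≤ f x) (hg : ∀ x, 0 ≤ g x)
    (hρ0 : 0 < ρ) (hρ : ρ < 1 / 2) (hτ : 0 ≤ τ)
    (hΔ : ∀ a b, Neighbor a b → |f a - f b| ≤ Δ)
    (happrox : ∀ x, (1 - ρ) * f x - τ ≤ g x ∧ g x ≤ (1 + ρ) * f x + τ)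
    (d d' : D) (hnb : Neighbor d d') :
    4 * ρ * g d + 4 * τ + Δ ≤ Real.exp (6 * ρ) * (4 * ρ * g d' + 4 * τ + Δ) := by
  have h1 := (happrox d).2
  have h2 := (happrox d').1
  have habs := hΔ d d' hnb
  have hΔ0 : 0 ≤ Δ := le_trans (abs_nonneg _) habs
  have hfd : f d - f d' ≤ Δ := le_trans (le_abs_self _) habs
  have hexp : 6 * ρ + 1 ≤ Real.exp (6 * ρ) := Real.add_one_le_exp _
  have hS : 0 ≤ 4 * ρ * g d' + 4 * τ + Δ := by nlinarith [mul_nonneg hρ0.le (hg d')]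
  have key : 4 * ρ * g d + 4 * τ + Δ ≤ (1 + 6 * ρ) * (4 * ρ * g d' + 4 * τ + Δ) := by
    nlinarith [hf d', hg d', mul_nonneg hρ0.le (hf d'), mul_nonneg hρ0.le hτ,
      mul_nonneg hρ0.le hΔ0, mul_nonneg (mul_nonneg hρ0.le hρ0.le) (hf d'),
      mul_nonneg (mul_nonneg hρ0.le hρ0.le) hτ]
  calc 4 * ρ * g d + 4 * τ + Δ ≤ (1 + 6 * ρ) * (4 * ρ * g d' + 4 * τ + Δ) := key
    _ ≤ Real.exp (6 * ρ) * (4 * ρ * g d' + 4 * τ + Δ) := by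
        apply mul_le_mul_of_nonneg_right _ hS
        linarith
end

section
/- Let A : D → R be an (ε,δ)-differentially private algorithm with finite range R, and let 0 < p < 1 satisfy δ ≤ (e^ε - 1)p / (|R|(1-p)). Define A' which with probability 1-p outputs A(D) and with probability p outputs a uniformly random element of R. Then A' is ε-differentially private (i.e., pure DP). -/
/-- Approximate-DP to pure-DP transformation: if `A` is `(ε,δ)`-DP with finite range `R`
and `δ ≤ (e^ε - 1)p / (|R|(1-p))`, then the algorithm `A'` which with probability `1-p`
outputs `A(D)` and with probability `p` outputs a uniform element of `R` is `ε`-DP.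
Algorithms are modeled by their output probability mass functions `A : D → R → ℝ`. -/
theorem approxDP_to_pureDP {D R : Type*} [Fintype R] [Nonempty R]
    (Neighbor : D → D → Prop) (A : D → R → ℝ)
    (hpos : ∀ d y, 0 ≤ A d y) (hsum : ∀ d, ∑ y : R, A d y = 1)
    (ε δ p : ℝ) (hδ : 0 ≤ δ) (hp0 : 0 < p) (hp1 : p < 1)
    (hδle : δ ≤ (Real.exp ε - 1) * p / ((Fintype.card R : ℝ) * (1 - p)))
    (hDP : ∀ d d', Neighbor d d' → ∀ S : Finset R,
      ∑ y ∈ S, A d y ≤ Real.exp ε * ∑ y ∈ S, A d' y + δ) :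
    ∀ d d', Neighbor d d' → ∀ S : Finset R,
      ∑ y ∈ S, ((1 - p) * A d y + p / (Fintype.card R : ℝ)) ≤
        Real.exp ε * ∑ y ∈ S, ((1 - p) * A d' y + p / (Fintype.card R : ℝ)) := by
  intro d d' hN S
  have hn : (0:ℝ) < (Fintype.card R : ℝ) := by
    exact_mod_cast Fintype.card_pos
  set n : ℝ := (Fintype.card R : ℝ) with hn'
  set E : ℝ := Real.exp ε with hE'
  set q : ℝ := p / n with hq'
  have hq0 : 0 < q := div_pos hp0 hn
  have hqn : q * n = p := div_mul_cancel₀ p (ne_of_gt hn)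
  have hden : 0 < n * (1 - p) := mul_pos hn (by linarith)
  have hnum : δ * (n * (1 - p)) ≤ (E - 1) * p := by
    have := (le_div_iff₀ hden).mp hδle
    linarith
  have hE1 : 1 ≤ E := by nlinarith
  have hkey : δ * (1 - p) ≤ (E - 1) * q := by
    have h2 : δ * (1 - p) * n ≤ (E - 1) * q * n := by nlinarith
    exact le_of_mul_le_mul_right h2 hn
  have hsplit : ∀ e : D, ∑ y ∈ S, ((1 - p) * A e y + q)
      = (1 - p) * ∑ y ∈ S, A e y + (S.card : ℝ) * q := by
    intro e
    rw [Finset.sum_add_distrib, Finset.sum_const, ← Finset.mul_sum]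
    ring
  rw [hsplit, hsplit]
  rcases S.eq_empty_or_nonempty with rfl | hne
  · simp
  · have hc1 : (1:ℝ) ≤ (S.card : ℝ) := by exact_mod_cast Finset.card_pos.mpr hne
    have hS := hDP d d' hN S
    have hSd' : 0 ≤ ∑ y ∈ S, A d' y := Finset.sum_nonneg fun y _ => hpos d' y
    nlinarith [mul_le_mul_of_nonneg_left hS (by linarith : (0:ℝ) ≤ 1 - p),
      mul_le_mul_of_nonneg_left hc1 (mul_nonneg (by linarith : (0:ℝ) ≤ E - 1) hq0.le)]
end

section
/- The distinct-elements function is (ρ,ρ)-smooth for any ρ ∈ (0,1): if B is a suffix of stream A with (1-ρ)·f(A) ≤ f(B), then for any stream C appended after, (1-ρ)·f(A ∪ C) ≤ f(B ∪ C), where f counts the number of distinct elements. -/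
/-- Smoothness of the distinct-elements function: if `B` is a suffix of the stream `A`
with `(1-ρ)·f(A) ≤ f(B)` (where `f` counts distinct elements), then for any stream `C`
appended afterwards, `(1-ρ)·f(A·C) ≤ f(B·C)`. -/
theorem distinct_elements_smooth {U : Type*} [DecidableEq U] (ρ : ℝ)
    (hρ0 : 0 < ρ) (hρ1 : ρ < 1) (A B : List U) (hsuffix : B <:+ A)
    (h : (1 - ρ) * (A.toFinset.card : ℝ) ≤ (B.toFinset.card : ℝ)) (C : List U) :
    (1 - ρ) * ((A ++ C).toFinset.card : ℝ) ≤ ((B ++ C).toFinset.card : ℝ) := by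
  have hBA : B.toFinset ⊆ A.toFinset := by
    intro x hx
    rw [List.mem_toFinset] at *
    exact hsuffix.mem hx
  have hsub : A.toFinset ∪ C.toFinset ⊆
      (B.toFinset ∪ C.toFinset) ∪ (A.toFinset \ B.toFinset) := by
    intro x hx
    rcases Finset.mem_union.mp hx with hx | hx
    · by_cases hxB : x ∈ B.toFinset
      · exact Finset.mem_union_left _ (Finset.mem_union_left _ hxB)
      · exact Finset.mem_union_right _ (Finset.mem_sdiff.mpr ⟨hx, hxB⟩)
    · exact Finset.mem_union_left _ (Finset.mem_union_right _ hx)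
  have h1 : (A.toFinset ∪ C.toFinset).card ≤
      (B.toFinset ∪ C.toFinset).card + (A.toFinset \ B.toFinset).card :=
    le_trans (Finset.card_le_card hsub) (Finset.card_union_le _ _)
  have h2 : (A.toFinset \ B.toFinset).card = A.toFinset.card - B.toFinset.card :=
    Finset.card_sdiff_of_subset hBA
  have h3 : B.toFinset.card ≤ A.toFinset.card := Finset.card_le_card hBA
  have h4 : B.toFinset.card ≤ (B.toFinset ∪ C.toFinset).card :=
    Finset.card_le_card Finset.subset_union_left
  rw [List.toFinset_append, List.toFinset_append]
  have h1' : ((A.toFinset ∪ C.toFinset).card : ℝ) ≤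
      ((B.toFinset ∪ C.toFinset).card : ℝ) + (A.toFinset.card : ℝ) - (B.toFinset.card : ℝ) := by
    rw [h2] at h1
    have h1'' : ((A.toFinset ∪ C.toFinset).card : ℝ) ≤
        (((B.toFinset ∪ C.toFinset).card + (A.toFinset.card - B.toFinset.card) : ℕ) : ℝ) :=
      Nat.cast_le.mpr h1
    push_cast [Nat.cast_sub h3] at h1''
    linarith
  have h4' : (B.toFinset.card : ℝ) ≤ ((B.toFinset ∪ C.toFinset).card : ℝ) := by
    exact_mod_cast h4
  nlinarith [h1', h4', h]
end
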